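/- arXiv:1310.3927 — 3 statements merged into one kernel-verified Lean document; each statement's English description precedes it below -/
import Mathlib

section
/- Let ρ:(0,∞)→(0,∞) be continuous, non-decreasing, with ∫_{0+} 1/ρ(s) ds = +∞. If f:[0,∞)→[0,∞) is measurable with f(0) = 0 and f(t) ≤ ∫_0^t ρ(f(s)) ds for all t ≥ 0, then f(t) = 0 for all t ≥ 0. -/
/-!
Let `F t = ∫₀ᵗ ρ(f)`, so `0 ≤ f ≤ F`. If `F` did not vanish at some `t₀`, let `c` be its last
zero before `t₀`. On `(c, t₀]` the function `K t = ∫_c^t ρ(F)` dominates `F > 0` and satisfies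
`K' = ρ(F) ≤ ρ(K)`, so `t ↦ Ψ(K t) + t` is nondecreasing there, where `Ψ y = ∫_y^1 ds/ρ(s)`.
Hence `Ψ ∘ K` stays bounded as `t ↓ c`, while `K t ↓ 0` forces `Ψ (K t) → ∞`.
-/

open Set MeasureTheory Filter Topology

theorem ContinuousOn.exists_eq_forall_Ioc_ne {β : Type*} [TopologicalSpace β] [T1Space β]
    {u : ℝ → β} {a b : ℝ} {y : β} (hab : a ≤ b) (hu : ContinuousOn u (Icc a b)) (ha : u a = y) :
    ∃ c ∈ Icc a b, u c = y ∧ ∀ t ∈ Ioc c b, u t ≠ y := by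
  have hS : IsCompact (Icc a b ∩ u ⁻¹' {y}) :=
    isCompact_Icc.of_isClosed_subset
      (hu.preimage_isClosed_of_isClosed isClosed_Icc isClosed_singleton) inter_subset_left
  obtain ⟨c, ⟨hc, hcy⟩, hmax⟩ := hS.exists_isGreatest ⟨a, left_mem_Icc.2 hab, ha⟩
  exact ⟨c, hc, hcy, fun t ht hty =>
    (hmax ⟨⟨hc.1.trans ht.1.le, ht.2⟩, hty⟩).not_gt ht.1⟩

namespace Osgood

variable {ρ : ℝ → ℝ}

theorem intervalIntegrable_comp (hρc : ContinuousOn ρ (Ioi 0)) (hρpos : ∀ r > 0, 0 < ρ r)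
    (hρmono : MonotoneOn ρ (Ioi 0)) {u : ℝ → ℝ} {a b : ℝ} (hab : a ≤ b)
    (hu : ContinuousOn u (Icc a b)) (hpos : ∀ t ∈ Ioc a b, 0 < u t) :
    IntervalIntegrable (fun t => ρ (u t)) volume a b := by
  obtain ⟨m, -, hmax⟩ := isCompact_Icc.exists_isMaxOn (nonempty_Icc.2 hab) hu
  have hcont : ContinuousOn (fun t => ρ (u t)) (Ioc a b) :=
    hρc.comp (hu.mono Ioc_subset_Icc_self) hpos
  rw [intervalIntegrable_iff_integrableOn_Ioc_of_le hab]
  refine IntegrableOn.of_bound measure_Ioc_lt_top (hcont.aestronglyMeasurable measurableSet_Ioc)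
    (ρ (u m)) (ae_restrict_of_forall_mem measurableSet_Ioc fun t ht => ?_)
  have hut : u t ≤ u m := hmax (Ioc_subset_Icc_self ht)
  rw [Real.norm_of_nonneg (hρpos _ (hpos t ht)).le]
  exact hρmono (hpos t ht) ((hpos t ht).trans_le hut) hut

theorem false_of_pos_of_hasDerivAt_le (hρc : ContinuousOn ρ (Ioi 0)) (hρpos : ∀ r > 0, 0 < ρ r)
    (hOsgood : Tendsto (fun ε => ∫ s in ε..(1:ℝ), 1 / ρ s) (𝓝[>] 0) atTop)
    {u u' : ℝ → ℝ} {a b : ℝ} (hab : a < b)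
    (hu : ContinuousOn u (Icc a b)) (hua : u a = 0) (hpos : ∀ t ∈ Ioc a b, 0 < u t)
    (hderiv : ∀ t ∈ Ioo a b, HasDerivAt u (u' t) t) (hle : ∀ t ∈ Ioo a b, u' t ≤ ρ (u t)) :
    False := by
  set Ψ : ℝ → ℝ := fun y => ∫ s in y..(1:ℝ), 1 / ρ s
  have hinv : ContinuousOn (fun s => 1 / ρ s) (Ioi 0) :=
    continuousOn_const.div hρc fun s hs => (hρpos s hs).ne'
  have hΨ : ∀ y > 0, HasDerivAt Ψ (-(1 / ρ y)) y := fun y hy =>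
    intervalIntegral.integral_hasDerivAt_left
      (hinv.mono fun s hs => (lt_min hy one_pos).trans_le hs.1).intervalIntegrable
      (hinv.stronglyMeasurableAtFilter isOpen_Ioi y hy) (hinv.continuousAt (Ioi_mem_nhds hy))
  have hmono : MonotoneOn (fun t => Ψ (u t) + t) (Ioc a b) := by
    refine monotoneOn_of_hasDerivWithinAt_nonneg (f' := fun t => -(1 / ρ (u t)) * u' t + 1)
      (convex_Ioc a b) (fun t ht => ?_) (fun t ht => ?_) (fun t ht => ?_)
    · exact ((hΨ _ (hpos t ht)).continuousAt.comp_continuousWithinAt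
        (hu.mono Ioc_subset_Icc_self t ht)).add continuousWithinAt_id
    · rw [interior_Ioc] at ht ⊢
      exact (((hΨ _ (hpos t (Ioo_subset_Ioc_self ht))).comp t (hderiv t ht)).add
        (hasDerivAt_id t)).hasDerivWithinAt
    · rw [interior_Ioc] at ht
      have hρu := hρpos _ (hpos t (Ioo_subset_Ioc_self ht))
      have hratio : u' t / ρ (u t) ≤ 1 := (div_le_one hρu).2 (hle t ht)
      rw [neg_mul, one_div_mul_eq_div]
      linarith
  have hnear : ∀ᶠ t in 𝓝[>] a, t ∈ Ioc a b := Ioc_mem_nhdsGT hab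
  have hbound : ∀ t ∈ Ioc a b, Ψ (u t) ≤ Ψ (u b) + (b - a) := fun t ht => by
    linarith [hmono ht (right_mem_Ioc.2 hab) ht.2, ht.1]
  have hu0 : Tendsto u (𝓝[>] a) (𝓝[>] 0) := by
    refine tendsto_nhdsWithin_iff.2 ⟨?_, ?_⟩
    · rw [← hua]
      exact (hu a (left_mem_Icc.2 hab.le)).tendsto.mono_left
        (nhdsWithin_le_of_mem (mem_of_superset hnear Ioc_subset_Icc_self))
    · exact hnear.mono hpos
  obtain ⟨t, ht, hlt⟩ :=
    (hnear.and ((hOsgood.comp hu0).eventually_gt_atTop (Ψ (u b) + (b - a)))).exists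
  exact (hbound t ht).not_gt hlt

theorem false_of_pos_of_le_integral (hρc : ContinuousOn ρ (Ioi 0)) (hρpos : ∀ r > 0, 0 < ρ r)
    (hρmono : MonotoneOn ρ (Ioi 0))
    (hOsgood : Tendsto (fun ε => ∫ s in ε..(1:ℝ), 1 / ρ s) (𝓝[>] 0) atTop)
    {u : ℝ → ℝ} {a b : ℝ} (hab : a < b) (hu : ContinuousOn u (Icc a b))
    (hpos : ∀ t ∈ Ioc a b, 0 < u t)
    (hle : ∀ t ∈ Ioc a b, u t ≤ ∫ s in a..t, ρ (u s)) : False := by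
  have hint := intervalIntegrable_comp hρc hρpos hρmono hab.le hu hpos
  have hKpos : ∀ t ∈ Ioc a b, 0 < ∫ s in a..t, ρ (u s) := fun t ht =>
    (hpos t ht).trans_le (hle t ht)
  have hcont : ContinuousOn (fun t => ρ (u t)) (Ioo a b) :=
    hρc.comp (hu.mono Ioo_subset_Icc_self) fun t ht => hpos t (Ioo_subset_Ioc_self ht)
  refine false_of_pos_of_hasDerivAt_le hρc hρpos hOsgood (u' := fun t => ρ (u t)) hab ?_
    intervalIntegral.integral_same hKpos (fun t ht => ?_) (fun t ht => ?_)
  · simpa only [uIcc_of_le hab.le] using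
      intervalIntegral.continuousOn_primitive_interval' hint left_mem_uIcc
  · exact intervalIntegral.integral_hasDerivAt_right
      (hint.mono_set
        (uIcc_subset_uIcc left_mem_uIcc (Ioo_subset_Icc_self.trans Icc_subset_uIcc ht)))
      (hcont.stronglyMeasurableAtFilter isOpen_Ioo t ht)
      (hcont.continuousAt (Ioo_mem_nhds ht.1 ht.2))
  · have ht' := Ioo_subset_Ioc_self ht
    exact hρmono (hpos t ht') (hKpos t ht') (hle t ht')

end Osgood

open Osgood in
theorem bihari_zero_general (ρ : ℝ → ℝ)
    (hρc : ContinuousOn ρ (Ioi 0))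
    (hρpos : ∀ r > 0, 0 < ρ r)
    (hρmono : MonotoneOn ρ (Ici 0))
    (hOsgood : Tendsto (fun ε => ∫ u in ε..(1:ℝ), 1 / ρ u) (nhdsWithin 0 (Ioi 0)) atTop)
    (f : ℝ → ℝ) (hfnonneg : ∀ t ≥ 0, 0 ≤ f t)
    (hint : ∀ a b : ℝ, 0 ≤ a → IntervalIntegrable (fun s => ρ (f s)) volume a b)
    (hf : ∀ t ≥ 0, f t ≤ ∫ s in (0:ℝ)..t, ρ (f s)) :
    ∀ t ≥ 0, f t = 0 := by
  intro t₀ ht₀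
  set F : ℝ → ℝ := fun t => ∫ s in (0:ℝ)..t, ρ (f s)
  have hFcont : ContinuousOn F (Icc 0 t₀) := by
    simpa only [uIcc_of_le ht₀] using
      intervalIntegral.continuousOn_primitive_interval' (hint 0 t₀ le_rfl) left_mem_uIcc
  suffices F t₀ = 0 from le_antisymm ((hf t₀ ht₀).trans_eq this) (hfnonneg t₀ ht₀)
  obtain ⟨c, hc, hFc, hFne⟩ := hFcont.exists_eq_forall_Ioc_ne ht₀ intervalIntegral.integral_same
  by_contra hne
  have hct : c < t₀ := hc.2.lt_of_ne (by rintro rfl; exact hne hFc)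
  have hFpos : ∀ t ∈ Ioc c t₀, 0 < F t := fun t ht =>
    ((hfnonneg t (hc.1.trans ht.1.le)).trans (hf t (hc.1.trans ht.1.le))).lt_of_ne (hFne t ht).symm
  have hρmono' := hρmono.mono Ioi_subset_Ici_self
  refine false_of_pos_of_le_integral hρc hρpos hρmono' hOsgood hct
    (hFcont.mono (Icc_subset_Icc_left hc.1)) hFpos fun t ht => ?_
  calc F t = ∫ s in c..t, ρ (f s) := by
        rw [← intervalIntegral.integral_interval_sub_left (hint 0 t le_rfl) (hint 0 c le_rfl)]
        simp only [F] at hFc ⊢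
        rw [hFc, sub_zero]
    _ ≤ ∫ s in c..t, ρ (F s) := by
        refine intervalIntegral.integral_mono_on ht.1.le (hint c t hc.1)
          (intervalIntegrable_comp hρc hρpos hρmono' ht.1.le
            (hFcont.mono (Icc_subset_Icc hc.1 ht.2)) fun s hs => hFpos s ⟨hs.1, hs.2.trans ht.2⟩)
          fun s hs => ?_
        have hs0 : 0 ≤ s := hc.1.trans hs.1
        exact hρmono (hfnonneg s hs0) ((hfnonneg s hs0).trans (hf s hs0)) (hf s hs0)

/-- Degenerate Bihari/Osgood: if `f(0) = 0` and `f(t) ≤ ∫_0^t ρ(f(s)) ds` with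
`∫_{0+} ds/ρ(s) = ∞`, then `f ≡ 0`. -/
theorem bihari_zero (ρ : ℝ → ℝ)
    (hρc : ContinuousOn ρ (Ioi 0))
    (hρpos : ∀ r > 0, 0 < ρ r)
    (hρnonneg : ∀ r ≥ 0, 0 ≤ ρ r)
    (hρmono : MonotoneOn ρ (Ici 0))
    (hOsgood : Tendsto (fun ε => ∫ u in ε..(1:ℝ), 1 / ρ u) (nhdsWithin 0 (Ioi 0)) atTop)
    (f : ℝ → ℝ) (hfm : Measurable f) (hfnonneg : ∀ t ≥ 0, 0 ≤ f t)
    (hf0 : f 0 = 0)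
    (hint : ∀ a b : ℝ, 0 ≤ a → IntervalIntegrable (fun s => ρ (f s)) volume a b)
    (hf : ∀ t ≥ 0, f t ≤ ∫ s in (0:ℝ)..t, ρ (f s)) :
    ∀ t ≥ 0, f t = 0 :=
  bihari_zero_general ρ hρc hρpos hρmono hOsgood f hfnonneg hint hf
end

section
/- Let ρ ∈ 𝒰 and let b, b̃: ℝ^d → ℝ^d be continuous, both satisfying the one-sided condition (x_j - y_j)(b_j(x) - b_j(y)) ≤ |x_j - y_j| ρ(‖x-y‖₁) (and similarly for b̃), and let w: [0,∞) → ℝ^d be any fixed continuous path. Suppose X, X̃: [0,∞) → ℝ^d are continuous and solve X_t = x + ∫_0^t b(X_s) ds + w_t and X̃_t = x + ∫_0^t b̃(X̃_s) ds + w_t. If δ := sup_{z} ‖b(z) - b̃(z)‖₁ restricted to a set containing the ranges of X, X̃ up to time T satisfies the bound ‖X_t - X̃_t‖₁ ≤ d∫_0^t ρ(‖X_s - X̃_s‖₁) ds + δ t for t ≤ T, then ‖X_t - X̃_t‖₁ ≤ G_ρ^{-1}(G_ρ(δ t) + d t) for all t ≤ T; in particular if b̃ = b (δ = 0) the two solutions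 coincide, giving pathwise uniqueness for the ODE with additive forcing. -/
/-! With `φ t = ∑ j, |X t j - Xtil t j|` and `c = δ t`, the function
`W s = c + d ∫₀ˢ ρ(max (φ r) c) dr` dominates `max φ c` and satisfies `W' ≤ d ρ(W)`, so
`s ↦ G_ρ(W s) - d s` is nonincreasing (Bihari's argument); hence `G_ρ(max (φ t) c) ≤ G_ρ(c) + d t`.
When `δ = 0` this holds for every `c > 0`, and the Osgood condition `G_ρ(c) → -∞` as `c → 0⁺`
forces `φ = 0`. -/

open Set MeasureTheory Filter

/-- `G_ρ(r) = ∫_1^r du/ρ(u)`. -/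
noncomputable def Grho (ρ : ℝ → ℝ) (r : ℝ) : ℝ := ∫ u in (1:ℝ)..r, 1 / ρ u

/-- Generalized inverse of `G_ρ`, with the convention `G_ρ⁻¹(-∞) = 0`. -/
noncomputable def GrhoInv (ρ : ℝ → ℝ) (s : ℝ) : ℝ := sInf {r : ℝ | 0 < r ∧ s ≤ Grho ρ r}

section Grho

variable {ρ : ℝ → ℝ}

lemma continuousOn_one_div_of_pos (hρc : ContinuousOn ρ (Ioi 0)) (hρpos : ∀ r > 0, 0 < ρ r) :
    ContinuousOn (fun u => 1 / ρ u) (Ioi 0) :=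
  continuousOn_const.div hρc fun r hr => (hρpos r hr).ne'

lemma intervalIntegrable_one_div_of_pos (hρc : ContinuousOn ρ (Ioi 0))
    (hρpos : ∀ r > 0, 0 < ρ r) {a b : ℝ} (ha : 0 < a) (hb : 0 < b) :
    IntervalIntegrable (fun u => 1 / ρ u) volume a b :=
  ((continuousOn_one_div_of_pos hρc hρpos).mono fun _ hu =>
    (lt_min ha hb).trans_le hu.1).intervalIntegrable

lemma hasDerivAt_Grho (hρc : ContinuousOn ρ (Ioi 0)) (hρpos : ∀ r > 0, 0 < ρ r)
    {r : ℝ} (hr : 0 < r) : HasDerivAt (Grho ρ) (1 / ρ r) r :=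
  intervalIntegral.integral_hasDerivAt_right
    (intervalIntegrable_one_div_of_pos hρc hρpos one_pos hr)
    ((continuousOn_one_div_of_pos hρc hρpos).stronglyMeasurableAtFilter isOpen_Ioi r hr)
    ((continuousOn_one_div_of_pos hρc hρpos).continuousAt (Ioi_mem_nhds hr))

lemma strictMonoOn_Grho (hρc : ContinuousOn ρ (Ioi 0)) (hρpos : ∀ r > 0, 0 < ρ r) :
    StrictMonoOn (Grho ρ) (Ioi 0) := by
  refine strictMonoOn_of_deriv_pos (convex_Ioi 0)
    (fun r hr => (hasDerivAt_Grho hρc hρpos hr).continuousAt.continuousWithinAt) ?_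
  intro r hr
  rw [interior_Ioi] at hr
  rw [(hasDerivAt_Grho hρc hρpos hr).deriv]
  exact one_div_pos.mpr (hρpos r hr)

lemma tendsto_Grho_nhdsGT_zero
    (hOsgood : Tendsto (fun ε => ∫ u in ε..(1:ℝ), 1 / ρ u) (nhdsWithin 0 (Ioi 0)) atTop) :
    Tendsto (Grho ρ) (nhdsWithin 0 (Ioi 0)) atBot := by
  refine (tendsto_neg_atTop_atBot.comp hOsgood).congr fun ε => ?_
  rw [Function.comp_apply, intervalIntegral.integral_symm, neg_neg, Grho]

/-- For `u ≥ 1`, `ρ u ≤ 2 C u`, so `G_ρ r ≥ log r / (2 C)`. -/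
lemma exists_pos_le_Grho (hρc : ContinuousOn ρ (Ioi 0)) (hρpos : ∀ r > 0, 0 < ρ r)
    (hρlin : ∃ C > 0, ∀ r > 0, ρ r ≤ C * (1 + r)) (c : ℝ) :
    ∃ r, 0 < r ∧ c ≤ Grho ρ r := by
  obtain ⟨C, hC, hlin⟩ := hρlin
  set r := Real.exp (2 * C * |c|)
  have hr : 1 ≤ r := Real.one_le_exp (by positivity)
  refine ⟨r, one_pos.trans_le hr, ?_⟩
  have hlog : ∫ u in (1:ℝ)..r, (2 * C)⁻¹ * (1 / u) = |c| := by
    rw [intervalIntegral.integral_const_mul, integral_one_div_of_pos one_pos (by positivity),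
      div_one, Real.log_exp]
    field_simp
  calc c ≤ |c| := le_abs_self c
    _ = ∫ u in (1:ℝ)..r, (2 * C)⁻¹ * (1 / u) := hlog.symm
    _ ≤ Grho ρ r := by
      refine intervalIntegral.integral_mono_on hr ?_
        (intervalIntegrable_one_div_of_pos hρc hρpos one_pos (one_pos.trans_le hr)) ?_
      · exact (continuousOn_const.mul (continuousOn_const.div continuousOn_id
          fun u hu => (one_pos.trans_le (by simpa [hr] using hu.1)).ne')).intervalIntegrable
      · intro u hu
        have hu0 : 0 < u := one_pos.trans_le hu.1
        rw [← one_div, one_div_mul_one_div]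
        refine one_div_le_one_div_of_le (hρpos u hu0) ?_
        linarith [hlin u hu0, mul_le_mul_of_nonneg_left hu.1 hC.le]

lemma le_GrhoInv_of_Grho_le (hρc : ContinuousOn ρ (Ioi 0)) (hρpos : ∀ r > 0, 0 < ρ r)
    (hρlin : ∃ C > 0, ∀ r > 0, ρ r ≤ C * (1 + r)) {a s : ℝ} (ha : 0 < a)
    (h : Grho ρ a ≤ s) : a ≤ GrhoInv ρ s := by
  obtain ⟨r₀, hr₀⟩ := exists_pos_le_Grho hρc hρpos hρlin s
  refine le_csInf ⟨r₀, hr₀⟩ fun r ⟨hr, hsr⟩ => ?_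
  exact (strictMonoOn_Grho hρc hρpos).le_iff_le ha hr |>.mp (h.trans hsr)

lemma GrhoInv_nonneg (s : ℝ) : 0 ≤ GrhoInv ρ s :=
  Real.sInf_nonneg fun _ hr => hr.1.le


lemma antitoneOn_Grho_comp_sub (hρc : ContinuousOn ρ (Ioi 0)) (hρpos : ∀ r > 0, 0 < ρ r)
    {W W' : ℝ → ℝ} {K a b : ℝ} (hW : ∀ t ∈ Icc a b, HasDerivAt W (W' t) t)
    (hWpos : ∀ t ∈ Icc a b, 0 < W t) (hW' : ∀ t ∈ Icc a b, W' t ≤ K * ρ (W t)) :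
    AntitoneOn (fun t => Grho ρ (W t) - K * t) (Icc a b) := by
  have hderiv : ∀ t ∈ Icc a b,
      HasDerivAt (fun t => Grho ρ (W t) - K * t) (1 / ρ (W t) * W' t - K) t := fun t ht =>
    ((hasDerivAt_Grho hρc hρpos (hWpos t ht)).comp t (hW t ht)).sub
      (by simpa using (hasDerivAt_id t).const_mul K)
  refine antitoneOn_of_deriv_nonpos (convex_Icc a b)
    (fun t ht => (hderiv t ht).continuousAt.continuousWithinAt)
    (fun t ht => (hderiv t (interior_subset ht)).differentiableAt.differentiableWithinAt) ?_
  intro t ht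
  have hρW := hρpos _ (hWpos t (interior_subset ht))
  rw [(hderiv t (interior_subset ht)).deriv, sub_nonpos, one_div_mul_eq_div, div_le_iff₀ hρW]
  exact hW' t (interior_subset ht)

/-- Bihari's inequality. -/
lemma Grho_max_le_of_le_add_integral (hρc : ContinuousOn ρ (Ioi 0))
    (hρpos : ∀ r > 0, 0 < ρ r) (hρmono : MonotoneOn ρ (Ici 0)) {u : ℝ → ℝ}
    (hu : Continuous u) {c K t₀ : ℝ} (hc : 0 < c) (hK : 0 ≤ K) (ht₀ : 0 ≤ t₀)
    (hu0 : ∀ t ∈ Icc 0 t₀, 0 ≤ u t)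
    (h : ∀ t ∈ Icc 0 t₀, u t ≤ c + K * ∫ s in (0:ℝ)..t, ρ (u s)) :
    Grho ρ (max (u t₀) c) ≤ Grho ρ c + K * t₀ := by
  have hmax_pos : ∀ s, 0 < max (u s) c := fun s => hc.trans_le (le_max_right _ _)
  set g := fun s => ρ (max (u s) c)
  have hg : Continuous g := hρc.comp_continuous (hu.max continuous_const) hmax_pos
  set W := fun t => c + K * ∫ s in (0:ℝ)..t, g s
  have hW : ∀ t, HasDerivAt W (K * g t) t := fun t =>
    ((hg.integral_hasStrictDerivAt 0 t).hasDerivAt.const_mul K).const_add c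
  have hint_nonneg : ∀ t ∈ Icc 0 t₀, 0 ≤ ∫ s in (0:ℝ)..t, g s := fun t ht =>
    intervalIntegral.integral_nonneg ht.1 fun s _ => (hρpos _ (hmax_pos s)).le
  have hint_le : ∀ t ∈ Icc 0 t₀, ∫ s in (0:ℝ)..t, ρ (u s) ≤ ∫ s in (0:ℝ)..t, g s := by
    intro t ht
    by_cases hint : IntervalIntegrable (fun s => ρ (u s)) volume 0 t
    · refine intervalIntegral.integral_mono_on ht.1 hint (hg.intervalIntegrable _ _) ?_
      intro s hs
      exact hρmono (hu0 s ⟨hs.1, hs.2.trans ht.2⟩) (hmax_pos s).le (le_max_left _ _)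
    · rw [intervalIntegral.integral_undef hint]
      exact hint_nonneg t ht
  have hmax_le_W : ∀ t ∈ Icc 0 t₀, max (u t) c ≤ W t := fun t ht =>
    max_le ((h t ht).trans (by linarith [mul_le_mul_of_nonneg_left (hint_le t ht) hK]))
      (le_add_of_nonneg_right (mul_nonneg hK (hint_nonneg t ht)))
  have hanti := antitoneOn_Grho_comp_sub hρc hρpos (fun t _ => hW t)
    (fun t ht => (hmax_pos t).trans_le (hmax_le_W t ht))
    (fun t ht => mul_le_mul_of_nonneg_left
      (hρmono (hmax_pos t).le ((hmax_pos t).trans_le (hmax_le_W t ht)).le (hmax_le_W t ht)) hK)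
    (left_mem_Icc.2 ht₀) (right_mem_Icc.2 ht₀) ht₀
  have ht₀mem := right_mem_Icc.2 ht₀
  calc Grho ρ (max (u t₀) c) ≤ Grho ρ (W t₀) :=
        (strictMonoOn_Grho hρc hρpos).monotoneOn (hmax_pos t₀)
          ((hmax_pos t₀).trans_le (hmax_le_W t₀ ht₀mem)) (hmax_le_W t₀ ht₀mem)
    _ ≤ Grho ρ c + K * t₀ := by
      simp only [W, intervalIntegral.integral_same, mul_zero, add_zero, sub_zero] at hanti
      linarith

/-- Bihari's inequality for every `c > 0`, combined with `G_ρ c → -∞` as `c → 0⁺`. -/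
lemma nonpos_of_le_integral_of_osgood (hρc : ContinuousOn ρ (Ioi 0)) (hρpos : ∀ r > 0, 0 < ρ r)
    (hρmono : MonotoneOn ρ (Ici 0))
    (hOsgood : Tendsto (fun ε => ∫ u in ε..(1:ℝ), 1 / ρ u) (nhdsWithin 0 (Ioi 0)) atTop)
    {u : ℝ → ℝ} (hu : Continuous u) {K t₀ : ℝ} (hK : 0 ≤ K) (ht₀ : 0 ≤ t₀)
    (hu0 : ∀ t ∈ Icc 0 t₀, 0 ≤ u t) (h : ∀ t ∈ Icc 0 t₀, u t ≤ K * ∫ s in (0:ℝ)..t, ρ (u s)) :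
    u t₀ ≤ 0 := by
  by_contra! hpos
  obtain ⟨c, hGc, hc⟩ := ((tendsto_Grho_nhdsGT_zero hOsgood).eventually_lt_atBot
    (Grho ρ (u t₀) - K * t₀)).and self_mem_nhdsWithin |>.exists
  have hbihari := Grho_max_le_of_le_add_integral hρc hρpos hρmono hu hc hK ht₀ hu0
    fun t ht => by linarith [h t ht]
  have := (strictMonoOn_Grho hρc hρpos).monotoneOn hpos (hpos.trans_le (le_max_left _ c))
    (le_max_left _ c)
  linarith

end Grho

theorem ode_stability_onesided_general (d : ℕ) (ρ : ℝ → ℝ)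
    (hρc : ContinuousOn ρ (Ioi 0))
    (hρpos : ∀ r > 0, 0 < ρ r)
    (hρmono : MonotoneOn ρ (Ici 0))
    (hρlin : ∃ C > 0, ∀ r > 0, ρ r ≤ C * (1 + r))
    (hOsgood : Tendsto (fun ε => ∫ u in ε..(1:ℝ), 1 / ρ u) (nhdsWithin 0 (Ioi 0)) atTop)
    (X Xtil : ℝ → Fin d → ℝ)
    (hX : Continuous X) (hXtil : Continuous Xtil)
    (T δ : ℝ) (hδ : 0 ≤ δ)
    (hbound : ∀ t ∈ Icc (0:ℝ) T,
      ∑ j, |X t j - Xtil t j| ≤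
        (d : ℝ) * (∫ s in (0:ℝ)..t, ρ (∑ j, |X s j - Xtil s j|)) + δ * t) :
    (∀ t ∈ Icc (0:ℝ) T,
      ∑ j, |X t j - Xtil t j| ≤ GrhoInv ρ (Grho ρ (δ * t) + (d : ℝ) * t)) ∧
    (δ = 0 → ∀ t ∈ Icc (0:ℝ) T, X t = Xtil t) := by
  set φ := fun t => ∑ j, |X t j - Xtil t j|
  have hφc : Continuous φ := by fun_prop
  have hφ0 : ∀ t, 0 ≤ φ t := fun t => Finset.sum_nonneg fun j _ => abs_nonneg _
  have hbound' : ∀ t ∈ Icc 0 T, ∀ s ∈ Icc 0 t, φ s ≤ δ * t + d * ∫ r in (0:ℝ)..s, ρ (φ r) :=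
    fun t ht s hs => by
      linarith [hbound s ⟨hs.1, hs.2.trans ht.2⟩, mul_le_mul_of_nonneg_left hs.2 hδ]
  have huniq : ∀ t ∈ Icc 0 T, δ * t = 0 → φ t ≤ 0 := fun t ht hδt =>
    nonpos_of_le_integral_of_osgood hρc hρpos hρmono hOsgood hφc (Nat.cast_nonneg d) ht.1
      (fun s _ => hφ0 s) fun s hs => by linarith [hbound' t ht s hs]
  refine ⟨fun t ht => ?_, fun hδ0 t ht => funext fun j => ?_⟩
  · rcases (mul_nonneg hδ ht.1).eq_or_lt with hδt | hδt
    · exact (huniq t ht hδt.symm).trans (GrhoInv_nonneg _)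
    · exact (le_max_left _ _).trans <| le_GrhoInv_of_Grho_le hρc hρpos hρlin
        (lt_max_of_lt_right hδt) <| Grho_max_le_of_le_add_integral hρc hρpos hρmono hφc hδt
          (Nat.cast_nonneg d) ht.1 (fun s _ => hφ0 s) (hbound' t ht)
  · have hφt : φ t = 0 := (huniq t ht (by rw [hδ0, zero_mul])).antisymm (hφ0 t)
    have := (Finset.sum_eq_zero_iff_of_nonneg fun j _ => abs_nonneg _).1 hφt j (Finset.mem_univ j)
    exact sub_eq_zero.1 (abs_eq_zero.1 this)

/-- Stability/uniqueness for the ODE with additive forcing under the one-sided condition: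
from `‖X_t - X̃_t‖₁ ≤ d∫_0^t ρ(‖X_s - X̃_s‖₁) ds + δ t` one gets
`‖X_t - X̃_t‖₁ ≤ G_ρ⁻¹(G_ρ(δ t) + d t)`; in particular `δ = 0` gives uniqueness. -/
theorem ode_stability_onesided (d : ℕ) (ρ : ℝ → ℝ)
    (hρc : ContinuousOn ρ (Ioi 0))
    (hρpos : ∀ r > 0, 0 < ρ r)
    (hρnonneg : ∀ r ≥ 0, 0 ≤ ρ r)
    (hρmono : MonotoneOn ρ (Ici 0))
    (hρlin : ∃ C > 0, ∀ r > 0, ρ r ≤ C * (1 + r))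
    (hOsgood : Tendsto (fun ε => ∫ u in ε..(1:ℝ), 1 / ρ u) (nhdsWithin 0 (Ioi 0)) atTop)
    (b btil : (Fin d → ℝ) → (Fin d → ℝ)) (hb : Continuous b) (hbtil : Continuous btil)
    (honeb : ∀ (j : Fin d) (x y : Fin d → ℝ),
      (x j - y j) * (b x j - b y j) ≤ |x j - y j| * ρ (∑ i, |x i - y i|))
    (honebtil : ∀ (j : Fin d) (x y : Fin d → ℝ),
      (x j - y j) * (btil x j - btil y j) ≤ |x j - y j| * ρ (∑ i, |x i - y i|))
    (w X Xtil : ℝ → Fin d → ℝ)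
    (hw : Continuous w) (hX : Continuous X) (hXtil : Continuous Xtil)
    (x : Fin d → ℝ) (T δ : ℝ) (hT : 0 < T) (hδ : 0 ≤ δ)
    (heqX : ∀ t ≥ (0:ℝ), ∀ j, X t j = x j + (∫ s in (0:ℝ)..t, b (X s) j) + w t j)
    (heqXtil : ∀ t ≥ (0:ℝ), ∀ j, Xtil t j = x j + (∫ s in (0:ℝ)..t, btil (Xtil s) j) + w t j)
    (hδb : ∀ t ∈ Icc (0:ℝ) T, ∑ j, |b (X t) j - btil (X t) j| ≤ δ)
    (hbound : ∀ t ∈ Icc (0:ℝ) T,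
      ∑ j, |X t j - Xtil t j| ≤
        (d : ℝ) * (∫ s in (0:ℝ)..t, ρ (∑ j, |X s j - Xtil s j|)) + δ * t) :
    (∀ t ∈ Icc (0:ℝ) T,
      ∑ j, |X t j - Xtil t j| ≤ GrhoInv ρ (Grho ρ (δ * t) + (d : ℝ) * t)) ∧
    (δ = 0 → ∀ t ∈ Icc (0:ℝ) T, X t = Xtil t) :=
  ode_stability_onesided_general d ρ hρc hρpos hρmono hρlin hOsgood X Xtil hX hXtil T δ hδ hbound
end

section
/- Let (P_t) be a Markov semigroup on bounded measurable functions on ℝ^d such that for all T > 0, x, y ∈ ℝ^d, and strictly positive bounded measurable f: P_T log f(y) ≤ log P_T f(x) + (C_T/2)‖x - y‖₁² for a constant C_T independent of x, y (the log-Harnack inequality with quadratic cost). Assume moreover P_T f is differentiable. Then the gradient estimate |∇P_T f(x)|² ≤ C_T (P_T f²(x) - (P_T f(x))²) holds for all bounded measurable f, where |∇P_T f(x)| = limsup_{y→x} |P_T f(x) - P_T f(y)|/‖x-y‖₁. -/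
/-!
Apply the log-Harnack inequality to `F = 1 + ε (f - P_T f(x))` for small `|ε|`. Bounding
`log (1 + s)` below by its second-order Taylor polynomial at the base point and above by `s` at the
other point gives `ε |P_T f(x) - P_T f(y)| ≤ ε² Var/2 + O(ε³) + C_T ρ²/2` with `ρ = ‖x - y‖₁`,
where `Var = P_T f²(x) - (P_T f(x))²`. Choosing `ε = s ρ` and letting `y → x` gives
`|∇P_T f(x)| ≤ s Var/2 + C_T/(2s)` for every `s > 0`; minimising over `s` (a discriminant
argument) gives `|∇P_T f(x)|² ≤ C_T Var`.
-/

open Filter Real Topology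

theorem sub_sq_div_two_sub_le_log_one_add {t : ℝ} (ht : |t| ≤ 1 / 2) :
    t - t ^ 2 / 2 - 2 * |t| ^ 3 ≤ log (1 + t) := by
  have htaylor := Real.abs_log_sub_add_sum_range_le (x := -t) (by rw [abs_neg]; linarith) 2
  simp only [Finset.sum_range_succ, Finset.sum_range_zero, abs_neg, sub_neg_eq_add] at htaylor
  have hcube : |t| ^ 3 / (1 - |t|) ≤ 2 * |t| ^ 3 := by
    rw [div_le_iff₀ (by linarith)]
    nlinarith [pow_nonneg (abs_nonneg t) 3]
  norm_num at htaylor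
  linarith [(abs_le.1 (htaylor.trans hcube)).1]

theorem abs_log_one_add_le_one {t : ℝ} (ht : |t| ≤ 1 / 2) : |log (1 + t)| ≤ 1 := by
  have hlower := sub_sq_div_two_sub_le_log_one_add ht
  have hupper : log (1 + t) ≤ t := by
    linarith [Real.log_le_sub_one_of_pos (show 0 < 1 + t by linarith [neg_abs_le t])]
  have ht2 : t ^ 2 ≤ 1 / 4 := by nlinarith [sq_abs t, abs_nonneg t]
  have ht3 : |t| ^ 3 ≤ 1 / 8 := by
    calc |t| ^ 3 ≤ (1 / 2) ^ 3 := pow_le_pow_left₀ (abs_nonneg t) ht 3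
      _ = 1 / 8 := by norm_num
  rw [abs_le]
  constructor <;> linarith [neg_abs_le t, le_abs_self t]

theorem sq_le_mul_of_forall_le_add_div {L V C : ℝ} (hL : 0 ≤ L) (hV : 0 ≤ V)
    (h : ∀ s > 0, L ≤ s * V / 2 + C / (2 * s)) : L ^ 2 ≤ C * V := by
  have hquad : ∀ s > 0, 0 ≤ V * (s * s) + -2 * L * s + C := fun s hs => by
    have := sub_nonneg.2 (h s hs)
    have hexp : V * (s * s) + -2 * L * s + C = 2 * s * (s * V / 2 + C / (2 * s) - L) := by
      field_simp; ring
    rw [hexp]; exact mul_nonneg (by positivity) this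
  have hC : 0 ≤ C := by
    have hcont : Tendsto (fun s : ℝ => V * (s * s) + -2 * L * s + C) (𝓝[>] 0) (𝓝 C) := by
      have := (Continuous.tendsto (f := fun s : ℝ => V * (s * s) + -2 * L * s + C)
        (by fun_prop) 0).mono_left (nhdsWithin_le_nhds (s := Set.Ioi 0))
      simpa using this
    exact ge_of_tendsto hcont (eventually_nhdsWithin_of_forall hquad)
  -- With `C ≥ 0`, the quadratic is also nonnegative for `s ≤ 0`, since `L, V ≥ 0`.
  have hdiscrim := discrim_le_zero (K := ℝ) fun s => by
    rcases lt_or_ge 0 s with hs | hs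
    · exact hquad s hs
    · nlinarith [mul_self_nonneg s]
  rw [discrim] at hdiscrim
  nlinarith

def IsBoundedFun {X : Type*} (g : X → ℝ) : Prop := ∃ M, ∀ x, |g x| ≤ M

namespace IsBoundedFun

variable {X : Type*} {g h : X → ℝ}

theorem const (b : ℝ) : IsBoundedFun fun _ : X => b := ⟨|b|, fun _ => le_rfl⟩

theorem add (hg : IsBoundedFun g) (hh : IsBoundedFun h) : IsBoundedFun fun x => g x + h x := by
  obtain ⟨M, hM⟩ := hg
  obtain ⟨N, hN⟩ := hh
  exact ⟨M + N, fun x => (abs_add_le _ _).trans (add_le_add (hM x) (hN x))⟩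

theorem const_mul (hg : IsBoundedFun g) (a : ℝ) : IsBoundedFun fun x => a * g x := by
  obtain ⟨M, hM⟩ := hg
  exact ⟨|a| * M, fun x => by
    rw [abs_mul]; exact mul_le_mul_of_nonneg_left (hM x) (abs_nonneg a)⟩

theorem pow (hg : IsBoundedFun g) (n : ℕ) : IsBoundedFun fun x => g x ^ n := by
  obtain ⟨M, hM⟩ := hg
  exact ⟨M ^ n, fun x => by rw [abs_pow]; exact pow_le_pow_left₀ (abs_nonneg _) (hM x) n⟩

end IsBoundedFun

structure IsMarkovOperator {X : Type*} [MeasurableSpace X] (Q : (X → ℝ) → X → ℝ) : Prop where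
  map_mul_add : ∀ (a : ℝ) (f g : X → ℝ), Measurable f → Measurable g → IsBoundedFun f →
    IsBoundedFun g → Q (fun x => a * f x + g x) = fun x => a * Q f x + Q g x
  mono : ∀ f g : X → ℝ, Measurable f → Measurable g → IsBoundedFun f → IsBoundedFun g →
    (∀ x, f x ≤ g x) → ∀ x, Q f x ≤ Q g x
  map_const : ∀ c : ℝ, Q (fun _ => c) = fun _ => c

namespace IsMarkovOperator

variable {X : Type*} [MeasurableSpace X] {Q : (X → ℝ) → X → ℝ} {f g : X → ℝ}

theorem map_mul_add_const (hQ : IsMarkovOperator Q) (a b : ℝ) (hg : Measurable g)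
    (hgb : IsBoundedFun g) :
    Q (fun x => a * g x + b) = fun x => a * Q g x + b := by
  rw [hQ.map_mul_add a g _ hg measurable_const hgb (.const b), hQ.map_const]

theorem map_add_const (hQ : IsMarkovOperator Q) (b : ℝ) (hg : Measurable g)
    (hgb : IsBoundedFun g) :
    Q (fun x => g x + b) = fun x => Q g x + b := by
  simpa only [one_mul] using hQ.map_mul_add_const 1 b hg hgb

theorem abs_apply_le (hQ : IsMarkovOperator Q) {R : ℝ} (hg : Measurable g)
    (hgR : ∀ x, |g x| ≤ R) (y : X) :
    |Q g y| ≤ R := by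
  have hle := hQ.mono g _ hg measurable_const ⟨R, hgR⟩ (.const R)
    (fun x => (abs_le.1 (hgR x)).2) y
  have hge := hQ.mono _ g measurable_const hg (.const (-R)) ⟨R, hgR⟩
    (fun x => (abs_le.1 (hgR x)).1) y
  rw [hQ.map_const] at hle hge
  exact abs_le.2 ⟨hge, hle⟩

theorem apply_nonneg (hQ : IsMarkovOperator Q) (hg : Measurable g) (hgb : IsBoundedFun g)
    (hg0 : ∀ x, 0 ≤ g x) (y : X) :
    0 ≤ Q g y := by
  simpa only [hQ.map_const] using hQ.mono _ g measurable_const hg (.const 0) hgb hg0 y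

theorem map_sub_sq (hQ : IsMarkovOperator Q) (b : ℝ) (hg : Measurable g) (hgb : IsBoundedFun g)
    (y : X) :
    Q (fun x => (g x - b) ^ 2) y = Q (fun x => g x ^ 2) y - 2 * b * Q g y + b ^ 2 := by
  have hexpand : (fun x => (g x - b) ^ 2) = fun x => (-2 * b) * g x + (g x ^ 2 + b ^ 2) := by
    ext x; ring
  rw [hexpand, hQ.map_mul_add _ g _ hg (by fun_prop) hgb ((hgb.pow 2).add (.const _)),
    hQ.map_add_const _ (by fun_prop) (hgb.pow 2)]
  ring

theorem mul_sub_le_of_logHarnack (hQ : IsMarkovOperator Q) {x y : X} {D : ℝ}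
    (hLH : ∀ F : X → ℝ, Measurable F → IsBoundedFun F → (∀ z, 0 < F z) →
      Q (fun z => log (F z)) x ≤ log (Q F y) + D)
    (hg : Measurable g) {R : ℝ} (hgR : ∀ z, |g z| ≤ R) {ε : ℝ} (hε : |ε| * R ≤ 1 / 2) :
    ε * (Q g x - Q g y) ≤ ε ^ 2 / 2 * Q (fun z => g z ^ 2) x + 2 * |ε| ^ 3 * R ^ 3 + D := by
  have hgb : IsBoundedFun g := ⟨R, hgR⟩
  have hsmall : ∀ {u : ℝ}, |u| ≤ R → |ε * u| ≤ 1 / 2 := fun hu => by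
    rw [abs_mul]; exact (mul_le_mul_of_nonneg_left hu (abs_nonneg ε)).trans hε
  set k := 2 * |ε| ^ 3 * R ^ 3
  have hlog_lower : ∀ z, ε * g z + (-(ε ^ 2 / 2) * g z ^ 2 + -k) ≤ log (1 + ε * g z) := by
    intro z
    have hcube : |ε * g z| ^ 3 ≤ (|ε| * R) ^ 3 := by
      rw [abs_mul]
      exact pow_le_pow_left₀ (by positivity)
        (mul_le_mul_of_nonneg_left (hgR z) (abs_nonneg ε)) 3
    have := sub_sq_div_two_sub_le_log_one_add (hsmall (hgR z))
    linarith [show (|ε| * R) ^ 3 = |ε| ^ 3 * R ^ 3 by ring,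
      show (ε * g z) ^ 2 = ε ^ 2 * g z ^ 2 by ring]
  have hlower : ε * Q g x + (-(ε ^ 2 / 2) * Q (fun z => g z ^ 2) x + -k)
      ≤ Q (fun z => log (1 + ε * g z)) x := by
    have hmono := hQ.mono _ _ (by fun_prop) (by fun_prop)
      (hgb.const_mul ε |>.add ((hgb.pow 2).const_mul _ |>.add (.const _)))
      ⟨1, fun z => abs_log_one_add_le_one (hsmall (hgR z))⟩ hlog_lower x
    rwa [hQ.map_mul_add _ _ _ hg (by fun_prop) hgb ((hgb.pow 2).const_mul _ |>.add (.const _)),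
      hQ.map_mul_add_const _ _ (by fun_prop) (hgb.pow 2)] at hmono
  have hupper : Q (fun z => log (1 + ε * g z)) x ≤ ε * Q g y + D := by
    have hQF : Q (fun z => 1 + ε * g z) y = 1 + ε * Q g y := by
      simpa only [add_comm] using congrFun (hQ.map_mul_add_const ε 1 hg hgb) y
    have hpos : 0 < 1 + ε * Q g y := by
      linarith [neg_abs_le (ε * Q g y), hsmall (hQ.abs_apply_le hg hgR y)]
    calc Q (fun z => log (1 + ε * g z)) x ≤ log (Q (fun z => 1 + ε * g z) y) + D :=
          hLH _ (by fun_prop) ((IsBoundedFun.const 1).add (hgb.const_mul ε))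
            fun z => by linarith [neg_abs_le (ε * g z), hsmall (hgR z)]
      _ ≤ ε * Q g y + D := by
          rw [hQF]; linarith [Real.log_le_sub_one_of_pos hpos]
  linarith

theorem mul_abs_sub_le_of_logHarnack (hQ : IsMarkovOperator Q) {x y : X} {D : ℝ}
    (hLH : ∀ F : X → ℝ, Measurable F → IsBoundedFun F → (∀ z, 0 < F z) →
      Q (fun z => log (F z)) x ≤ log (Q F y) + D)
    (hg : Measurable g) {R : ℝ} (hgR : ∀ z, |g z| ≤ R) {ε : ℝ} (hε0 : 0 ≤ ε)
    (hε : ε * R ≤ 1 / 2) :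
    ε * |Q g x - Q g y| ≤ ε ^ 2 / 2 * Q (fun z => g z ^ 2) x + 2 * ε ^ 3 * R ^ 3 + D := by
  have hpos := hQ.mul_sub_le_of_logHarnack hLH hg hgR (ε := ε) (by rwa [abs_of_nonneg hε0])
  have hneg := hQ.mul_sub_le_of_logHarnack hLH hg hgR (ε := -ε)
    (by rwa [abs_neg, abs_of_nonneg hε0])
  rw [abs_of_nonneg hε0] at hpos
  rw [abs_neg, abs_of_nonneg hε0, neg_sq] at hneg
  rcases abs_cases (Q g x - Q g y) with ⟨h, _⟩ | ⟨h, _⟩ <;> rw [h] <;> linarith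

theorem limsup_sq_le_of_logHarnack (hQ : IsMarkovOperator Q) (hf : Measurable f)
    (hfb : IsBoundedFun f) {l : Filter X} [l.NeBot] {ρ : X → ℝ} (hρ : Tendsto ρ l (𝓝[>] 0))
    {C : ℝ} {x : X}
    (hLH : ∀ F : X → ℝ, Measurable F → IsBoundedFun F → (∀ z, 0 < F z) →
      ∀ y, Q (fun z => log (F z)) x ≤ log (Q F y) + C / 2 * ρ y ^ 2) :
    limsup (fun y => |Q f x - Q f y| / ρ y) l ^ 2
      ≤ C * (Q (fun z => f z ^ 2) x - Q f x ^ 2) := by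
  set c := Q f x
  set q := fun y => |Q f x - Q f y| / ρ y
  have ⟨M, hM⟩ := hfb
  have hg : Measurable fun z => f z - c := by fun_prop
  set R := 2 * M
  have hgR : ∀ z, |f z - c| ≤ R := fun z => by
    have := hQ.abs_apply_le hf hM x
    linarith [abs_sub (f z) c, hM z]
  have hQg : Q (fun z => f z - c) = fun z => Q f z - c := by
    simpa only [sub_eq_add_neg] using hQ.map_add_const (-c) hf hfb
  have hvar : Q (fun z => (f z - c) ^ 2) x = Q (fun z => f z ^ 2) x - c ^ 2 := by
    rw [hQ.map_sub_sq c hf hfb]; ring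
  set V := Q (fun z => (f z - c) ^ 2) x
  rw [← hvar]
  have hV : 0 ≤ V :=
    hQ.apply_nonneg (by fun_prop) ((hfb.add (.const _)).pow 2) (fun z => sq_nonneg _) x
  have hρ0 : Tendsto ρ l (𝓝 0) := hρ.mono_right nhdsWithin_le_nhds
  have hq0 : ∀ᶠ y in l, 0 ≤ q y := (tendsto_nhdsWithin_iff.1 hρ).2.mono fun y hy =>
    div_nonneg (abs_nonneg _) (le_of_lt hy)
  have hq_le :
      ∀ s > 0, ∀ᶠ y in l, q y ≤ s * V / 2 + C / (2 * s) + 2 * s ^ 2 * R ^ 3 * ρ y := by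
    intro s hs
    have hsmall : ∀ᶠ y in l, s * ρ y * R ≤ 1 / 2 :=
      (by simpa using (hρ0.const_mul s).mul_const R : Tendsto (fun y => s * ρ y * R) l (𝓝 0))
        |>.eventually_le_const (by norm_num)
    filter_upwards [hsmall, tendsto_nhdsWithin_iff.1 hρ |>.2] with y hy hρy
    have hρy : 0 < ρ y := hρy
    have hkey := hQ.mul_abs_sub_le_of_logHarnack (hLH · · · · y) hg hgR
      (mul_nonneg hs.le hρy.le) hy
    rw [hQg, sub_sub_sub_cancel_right] at hkey
    rw [div_le_iff₀ hρy]
    refine le_of_mul_le_mul_left (hkey.trans_eq ?_) (mul_pos hs hρy)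
    field_simp
    ring
  have hlim : ∀ s, Tendsto (fun y => s * V / 2 + C / (2 * s) + 2 * s ^ 2 * R ^ 3 * ρ y) l
      (𝓝 (s * V / 2 + C / (2 * s))) := fun s => by
    simpa using tendsto_const_nhds.add (hρ0.const_mul (2 * s ^ 2 * R ^ 3))
  have hlimsup : ∀ s > 0, limsup q l ≤ s * V / 2 + C / (2 * s) := fun s hs =>
    (hlim s).limsup_eq ▸ limsup_le_limsup (hq_le s hs)
      (isCoboundedUnder_le_of_eventually_le l hq0) (hlim s).isBoundedUnder_le
  have hL : 0 ≤ limsup q l :=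
    le_limsup_of_frequently_le hq0.frequently
      ((hlim 1).isBoundedUnder_le.mono_le (hq_le 1 one_pos))
  exact sq_le_mul_of_forall_le_add_div hL hV hlimsup

end IsMarkovOperator

theorem sum_abs_sub_pos {ι : Type*} [Fintype ι] {x y : ι → ℝ} (h : y ≠ x) :
    0 < ∑ j, |x j - y j| := by
  obtain ⟨j, hj⟩ := Function.ne_iff.1 h
  exact (abs_pos.2 (sub_ne_zero.2 hj.symm)).trans_le
    (Finset.single_le_sum (fun i _ => abs_nonneg (x i - y i)) (Finset.mem_univ j))

theorem tendsto_sum_abs_sub_nhdsNE {ι : Type*} [Fintype ι] (x : ι → ℝ) :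
    Tendsto (fun y => ∑ j, |x j - y j|) (𝓝[≠] x) (𝓝[>] 0) := by
  refine tendsto_nhdsWithin_iff.2 ⟨?_, eventually_nhdsWithin_of_forall fun y => sum_abs_sub_pos⟩
  have := (Continuous.tendsto (f := fun y : ι → ℝ => ∑ j, |x j - y j|) (by fun_prop) x)
  simpa using this.mono_left nhdsWithin_le_nhds

theorem logHarnack_implies_gradient_estimate_general (d : ℕ)
    (P : ℝ → ((Fin d → ℝ) → ℝ) → ((Fin d → ℝ) → ℝ)) (C : ℝ → ℝ)
    (hlin : ∀ T > (0:ℝ), ∀ (a : ℝ) (f g : (Fin d → ℝ) → ℝ),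
      Measurable f → Measurable g → (∃ M, ∀ x, |f x| ≤ M) → (∃ M, ∀ x, |g x| ≤ M) →
      P T (fun x => a * f x + g x) = fun x => a * P T f x + P T g x)
    (hmonot : ∀ T > (0:ℝ), ∀ f g : (Fin d → ℝ) → ℝ,
      Measurable f → Measurable g → (∃ M, ∀ x, |f x| ≤ M) → (∃ M, ∀ x, |g x| ≤ M) →
      (∀ x, f x ≤ g x) → ∀ x, P T f x ≤ P T g x)
    (hconst : ∀ T > (0:ℝ), ∀ c : ℝ, P T (fun _ => c) = fun _ => c)
    (hLH : ∀ T > (0:ℝ), ∀ f : (Fin d → ℝ) → ℝ,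
      Measurable f → (∃ M, ∀ x, |f x| ≤ M) → (∀ x, 0 < f x) →
      ∀ x y : Fin d → ℝ,
        P T (fun z => Real.log (f z)) y ≤
          Real.log (P T f x) + C T / 2 * (∑ j, |x j - y j|) ^ 2)
    (T : ℝ) (hT : 0 < T)
    (f : (Fin d → ℝ) → ℝ) (hf : Measurable f) (hfb : ∃ M, ∀ x, |f x| ≤ M) :
    ∀ x : Fin d → ℝ,
      (Filter.limsup (fun y => |P T f x - P T f y| / ∑ j, |x j - y j|)
          (nhdsWithin x {x}ᶜ)) ^ 2 ≤
        C T * (P T (fun z => f z ^ 2) x - (P T f x) ^ 2) := by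
  intro x
  have hP : IsMarkovOperator (P T) := ⟨hlin T hT, hmonot T hT, hconst T hT⟩
  rcases subsingleton_or_nontrivial (Fin d → ℝ) with hX | hX
  · -- For `d = 0` the punctured neighbourhood filter is `⊥`, on which a real `limsup` is
    -- `sInf univ = 0`.
    obtain ⟨b, rfl⟩ : ∃ b, f = fun _ => b :=
      ⟨f x, funext fun z => congrArg f (Subsingleton.elim z x)⟩
    have hbot : 𝓝[≠] x = ⊥ := by
      rw [show ({x}ᶜ : Set (Fin d → ℝ)) = ∅ by ext y; simp [Subsingleton.elim y x],
        nhdsWithin_empty]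
    simp [hconst T hT, hbot, limsup_eq]
  · refine hP.limsup_sq_le_of_logHarnack hf hfb (tendsto_sum_abs_sub_nhdsNE x)
      fun F hF hFb hFpos y => ?_
    simpa only [abs_sub_comm (y _)] using hLH T hT F hF hFb hFpos y x

/-- log-Harnack inequality with quadratic cost implies the variance-type gradient estimate
`|∇P_T f(x)|² ≤ C_T (P_T f²(x) - (P_T f(x))²)`. -/
theorem logHarnack_implies_gradient_estimate (d : ℕ)
    (P : ℝ → ((Fin d → ℝ) → ℝ) → ((Fin d → ℝ) → ℝ)) (C : ℝ → ℝ)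
    (hlin : ∀ T > (0:ℝ), ∀ (a : ℝ) (f g : (Fin d → ℝ) → ℝ),
      Measurable f → Measurable g → (∃ M, ∀ x, |f x| ≤ M) → (∃ M, ∀ x, |g x| ≤ M) →
      P T (fun x => a * f x + g x) = fun x => a * P T f x + P T g x)
    (hmonot : ∀ T > (0:ℝ), ∀ f g : (Fin d → ℝ) → ℝ,
      Measurable f → Measurable g → (∃ M, ∀ x, |f x| ≤ M) → (∃ M, ∀ x, |g x| ≤ M) →
      (∀ x, f x ≤ g x) → ∀ x, P T f x ≤ P T g x)
    (hconst : ∀ T > (0:ℝ), ∀ c : ℝ, P T (fun _ => c) = fun _ => c)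
    (hLH : ∀ T > (0:ℝ), ∀ f : (Fin d → ℝ) → ℝ,
      Measurable f → (∃ M, ∀ x, |f x| ≤ M) → (∀ x, 0 < f x) →
      ∀ x y : Fin d → ℝ,
        P T (fun z => Real.log (f z)) y ≤
          Real.log (P T f x) + C T / 2 * (∑ j, |x j - y j|) ^ 2)
    (T : ℝ) (hT : 0 < T)
    (f : (Fin d → ℝ) → ℝ) (hf : Measurable f) (hfb : ∃ M, ∀ x, |f x| ≤ M)
    (hdiff : Differentiable ℝ (P T f)) :
    ∀ x : Fin d → ℝ,
      (Filter.limsup (fun y => |P T f x - P T f y| / ∑ j, |x j - y j|)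
          (nhdsWithin x {x}ᶜ)) ^ 2 ≤
        C T * (P T (fun z => f z ^ 2) x - (P T f x) ^ 2) :=
  logHarnack_implies_gradient_estimate_general d P C hlin hmonot hconst hLH T hT f hf hfb
end
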